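/- arXiv:2004.14226 — 3 statements merged into one kernel-verified Lean document; each statement's English description precedes it below -/
import Mathlib

section
/- Let H be a separable complex Hilbert space and let μ be a Borel probability measure on H with ∫ ‖ψ‖² dμ(ψ) = 1 and mean zero (∫ ⟨φ, ψ⟩ dμ(ψ) = 0 for all φ ∈ H). Let Aμ be the measure Aμ(dψ) = ‖ψ‖² μ(dψ) and let P: H∖{0} → S(H), P(ψ) = ψ/‖ψ‖. Then the pushforward ν = P_*(Aμ) is a Borel probability measure on the unit sphere S(H), and its density operator equals the covariance operator of μ: for all φ, χ ∈ H, ∫_{S(H)} ⟨φ, ψ⟩⟨ψ, χ⟩ dν(ψ) = ∫_H ⟨φ, ψ⟩⟨ψ, χ⟩ dμ(ψ). -/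
open MeasureTheory
open scoped InnerProductSpace ComplexInnerProductSpace ENNReal

/-!
Weighting by `‖ψ‖²` and then normalising `ψ ↦ ψ / ‖ψ‖` changes nothing in the integrand
`⟪φ, ψ⟫⟪ψ, χ⟫`, which is homogeneous of degree two in `ψ`; this gives the identity of the
density and covariance operators. The weight has total mass `∫ ‖ψ‖² dμ = 1` and vanishes at
`0`, the only point that normalisation does not send to the unit sphere.
-/

section NormalizeMeasure

variable {E : Type*} [NormedAddCommGroup E]

theorem preimage_normalize_sphere [NormedSpace ℝ E] :
    (fun ψ : E => ‖ψ‖⁻¹ • ψ) ⁻¹' Metric.sphere 0 1 = {0}ᶜ := by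
  ext ψ
  by_cases hψ : ψ = 0
  · simp [hψ]
  · simp [hψ, norm_smul]

variable [MeasurableSpace E]

theorem withDensity_nnnorm_sq_univ (μ : Measure E) (h : ∫ ψ, ‖ψ‖ ^ 2 ∂μ = 1) :
    μ.withDensity (fun ψ => (‖ψ‖₊ ^ 2 : ℝ≥0∞)) Set.univ = 1 := by
  have hint : Integrable (fun ψ : E => ‖ψ‖ ^ 2) μ :=
    Integrable.of_integral_ne_zero (by rw [h]; exact one_ne_zero)
  rw [withDensity_apply _ MeasurableSet.univ, setLIntegral_univ, ← ENNReal.ofReal_one, ← h,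
    ofReal_integral_eq_lintegral_ofReal hint (Filter.Eventually.of_forall fun ψ => by positivity)]
  refine lintegral_congr fun ψ => ?_
  rw [ENNReal.ofReal_pow (norm_nonneg _), ofReal_norm, enorm_eq_nnnorm]

theorem withDensity_nnnorm_sq_singleton_zero [MeasurableSingletonClass E] (μ : Measure E) :
    μ.withDensity (fun ψ => (‖ψ‖₊ ^ 2 : ℝ≥0∞)) {0} = 0 := by
  simp [withDensity_apply _ (measurableSet_singleton _)]

variable [NormedSpace ℝ E] [SecondCountableTopology E] [BorelSpace E]

theorem measurable_normalize : Measurable fun ψ : E => ‖ψ‖⁻¹ • ψ :=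
  measurable_norm.inv.smul measurable_id

theorem map_normalize_apply_sphere {ν : Measure E} (hν : ν {0} = 0) :
    ν.map (fun ψ : E => ‖ψ‖⁻¹ • ψ) (Metric.sphere 0 1) = ν Set.univ := by
  rw [Measure.map_apply measurable_normalize Metric.isClosed_sphere.measurableSet,
    preimage_normalize_sphere]
  exact measure_congr (ae_eq_univ.2 (by rwa [compl_compl]))

end NormalizeMeasure

section Density

variable {H : Type*} [NormedAddCommGroup H] [InnerProductSpace ℂ H]

theorem sq_norm_smul_inner_mul_inner_normalize (φ ψ χ : H) :
    ‖ψ‖ ^ 2 • (⟪φ, ‖ψ‖⁻¹ • ψ⟫_ℂ * ⟪‖ψ‖⁻¹ • ψ, χ⟫_ℂ) = ⟪φ, ψ⟫_ℂ * ⟪ψ, χ⟫_ℂ := by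
  by_cases hψ : ψ = 0
  · simp [hψ]
  have hn : (‖ψ‖ : ℂ) ≠ 0 := by exact_mod_cast norm_ne_zero_iff.mpr hψ
  have hsmul : ‖ψ‖⁻¹ • ψ = (‖ψ‖ : ℂ)⁻¹ • ψ := by rw [← Complex.ofReal_inv, Complex.coe_smul]
  simp only [hsmul, inner_smul_right, inner_smul_left, map_inv₀, Complex.conj_ofReal,
    Complex.real_smul, Complex.ofReal_pow]
  field_simp

variable [SecondCountableTopology H] [MeasurableSpace H] [BorelSpace H]

theorem integral_inner_mul_inner_map_normalize_withDensity (μ : Measure H) (φ χ : H) :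
    ∫ ψ, ⟪φ, ψ⟫_ℂ * ⟪ψ, χ⟫_ℂ
        ∂((μ.withDensity (fun ψ => (‖ψ‖₊ ^ 2 : ℝ≥0∞))).map (fun ψ => ‖ψ‖⁻¹ • ψ)) =
      ∫ ψ, ⟪φ, ψ⟫_ℂ * ⟪ψ, χ⟫_ℂ ∂μ := by
  have hcont : Continuous fun ψ : H => ⟪φ, ψ⟫_ℂ * ⟪ψ, χ⟫_ℂ := by fun_prop
  simp_rw [integral_map measurable_normalize.aemeasurable hcont.aestronglyMeasurable,
    ← ENNReal.coe_pow, integral_withDensity_eq_integral_smul (measurable_nnnorm.pow_const 2)]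
  congr with ψ
  rw [← sq_norm_smul_inner_mul_inner_normalize φ ψ χ, NNReal.smul_def]
  simp

end Density

theorem adjustProject_densityOperator_eq_covariance_general
    {H : Type*} [NormedAddCommGroup H] [InnerProductSpace ℂ H]
    [SecondCountableTopology H] [MeasurableSpace H] [BorelSpace H]
    (μ : Measure H)
    (h2 : ∫ ψ, ‖ψ‖ ^ 2 ∂μ = 1) :
    IsProbabilityMeasure
      ((μ.withDensity (fun ψ => (‖ψ‖₊ ^ 2 : ℝ≥0∞))).map (fun ψ => ‖ψ‖⁻¹ • ψ)) ∧
    ((μ.withDensity (fun ψ => (‖ψ‖₊ ^ 2 : ℝ≥0∞))).map (fun ψ => ‖ψ‖⁻¹ • ψ))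
      (Metric.sphere (0 : H) 1) = 1 ∧
    ∀ φ χ : H,
      (∫ ψ, ⟪φ, ψ⟫_ℂ * ⟪ψ, χ⟫_ℂ
          ∂((μ.withDensity (fun ψ => (‖ψ‖₊ ^ 2 : ℝ≥0∞))).map (fun ψ => ‖ψ‖⁻¹ • ψ)))
        = ∫ ψ, ⟪φ, ψ⟫_ℂ * ⟪ψ, χ⟫_ℂ ∂μ := by
  have hmass := withDensity_nnnorm_sq_univ μ h2
  refine ⟨⟨?_⟩, ?_, integral_inner_mul_inner_map_normalize_withDensity μ⟩
  · rw [Measure.map_apply measurable_normalize MeasurableSet.univ, Set.preimage_univ, hmass]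
  · rw [map_normalize_apply_sphere (withDensity_nnnorm_sq_singleton_zero μ), hmass]

/-- Let `μ` be a Borel probability measure on a separable complex Hilbert
space with `∫ ‖ψ‖² dμ = 1` and mean zero. Let `Aμ(dψ) = ‖ψ‖² μ(dψ)` and let
`P(ψ) = ψ/‖ψ‖`. Then `ν = P_*(Aμ)` is a Borel probability measure concentrated on the
unit sphere, and its density operator equals the covariance operator of `μ`:
`∫ ⟪φ, ψ⟫⟪ψ, χ⟫ dν(ψ) = ∫ ⟪φ, ψ⟫⟪ψ, χ⟫ dμ(ψ)` for all `φ, χ`. -/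
theorem adjustProject_densityOperator_eq_covariance
    {H : Type*} [NormedAddCommGroup H] [InnerProductSpace ℂ H] [CompleteSpace H]
    [SecondCountableTopology H] [MeasurableSpace H] [BorelSpace H]
    (μ : Measure H) [IsProbabilityMeasure μ]
    (h2 : ∫ ψ, ‖ψ‖ ^ 2 ∂μ = 1)
    (hmean : ∀ φ : H, ∫ ψ, ⟪φ, ψ⟫_ℂ ∂μ = 0) :
    IsProbabilityMeasure
      ((μ.withDensity (fun ψ => (‖ψ‖₊ ^ 2 : ℝ≥0∞))).map (fun ψ => ‖ψ‖⁻¹ • ψ)) ∧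
    ((μ.withDensity (fun ψ => (‖ψ‖₊ ^ 2 : ℝ≥0∞))).map (fun ψ => ‖ψ‖⁻¹ • ψ))
      (Metric.sphere (0 : H) 1) = 1 ∧
    ∀ φ χ : H,
      (∫ ψ, ⟪φ, ψ⟫_ℂ * ⟪ψ, χ⟫_ℂ
          ∂((μ.withDensity (fun ψ => (‖ψ‖₊ ^ 2 : ℝ≥0∞))).map (fun ψ => ‖ψ‖⁻¹ • ψ)))
        = ∫ ψ, ⟪φ, ψ⟫_ℂ * ⟪ψ, χ⟫_ℂ ∂μ :=
  adjustProject_densityOperator_eq_covariance_general μ h2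
end

section
/- Let H be a separable complex Hilbert space, and for n ∈ ℕ let ρₙ and ρ be positive trace-class operators on H with tr ρₙ = tr ρ = 1, such that tr |ρₙ − ρ| → 0 as n → ∞. Then for every orthonormal basis {bᵢ : i ∈ ℕ} of H, the tails of the diagonal entries are uniformly small: sup_{n ∈ ℕ} ∑_{i ≥ k} ⟨bᵢ, ρₙ bᵢ⟩ → 0 as k → ∞. -/
/-!
Since `ρₙ - ρ` is self-adjoint, it lies below its absolute value `Δₙ = |ρₙ - ρ|`, so on the
diagonal `⟪bᵢ, ρₙ bᵢ⟫ ≤ ⟪bᵢ, ρ bᵢ⟫ + ⟪bᵢ, Δₙ bᵢ⟫`. Summing over `i ≥ k` bounds the `k`-th tail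
of `ρₙ` by the `k`-th tail of `ρ` plus `tr Δₙ`. For `n` large the second term is small uniformly
in `k`; the finitely many remaining `n` have tails tending to zero individually.
-/

open Filter
open scoped InnerProductSpace ComplexInnerProductSpace Topology

section

variable {G : Type*} [AddCommGroup G] [TopologicalSpace G] [IsTopologicalAddGroup G]

theorem tendsto_tsum_subtype_le_atTop_zero (f : ℕ → G) :
    Tendsto (fun k => ∑' i : {i : ℕ // k ≤ i}, f i) atTop (𝓝 0) := by
  refine ((tendsto_tsum_compl_atTop_zero f).comp tendsto_finset_range).congr fun k => ?_
  exact (Equiv.subtypeEquivRight fun i => by simp).tsum_eq (fun i : {i : ℕ // k ≤ i} => f i)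

end

section

variable {A : Type*} [NonUnitalRing A] [StarRing A] [TopologicalSpace A]
  [Module ℝ A] [SMulCommClass ℝ A A] [IsScalarTower ℝ A A]
  [NonUnitalContinuousFunctionalCalculus ℝ A IsSelfAdjoint]
  [PartialOrder A] [StarOrderedRing A] [NonnegSpectrumClass ℝ A]
  [IsTopologicalRing A] [T2Space A]

theorem IsSelfAdjoint.le_cfcAbs {a : A} (ha : IsSelfAdjoint a) : a ≤ CFC.abs a := by
  rw [← sub_nonneg, CFC.abs_sub_self a ha]
  exact nsmul_nonneg (CFC.negPart_nonneg a) 2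

theorem IsSelfAdjoint.le_of_mul_self_eq {a d : A} (ha : IsSelfAdjoint a) (hd : 0 ≤ d)
    (h : d * d = a * a) : a ≤ d := by
  have : CFC.abs a = d := CFC.sqrt_unique (by rw [h, ha.star_eq]) hd
  exact this ▸ ha.le_cfcAbs

end

namespace ContinuousLinearMap

variable {H : Type*} [NormedAddCommGroup H] [InnerProductSpace ℂ H] [CompleteSpace H]

theorem re_inner_apply_le_of_comp_self_eq {A D : H →L[ℂ] H} (hA : IsSelfAdjoint A)
    (hD : D.IsPositive) (h : D ∘L D = adjoint A ∘L A) (x : H) :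
    (⟪x, A x⟫_ℂ).re ≤ (⟪x, D x⟫_ℂ).re := by
  rw [← star_eq_adjoint, hA.star_eq] at h
  have hle : A ≤ D := hA.le_of_mul_self_eq ((nonneg_iff_isPositive D).2 hD) h
  simpa [inner_sub_right] using (le_def A D).1 hle |>.re_inner_nonneg_right x

end ContinuousLinearMap

theorem tendsto_iSup_zero_of_le_add {ι : Type*} {l : Filter ι} {T : ℕ → ι → ℝ} {s : ι → ℝ}
    {d : ℕ → ℝ} (hT0 : ∀ n k, 0 ≤ T n k) (hT : ∀ n, Tendsto (T n) l (𝓝 0))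
    (hs : Tendsto s l (𝓝 0)) (hd : Tendsto d atTop (𝓝 0))
    (hle : ∀ n k, T n k ≤ s k + d n) :
    Tendsto (fun k => ⨆ n, T n k) l (𝓝 0) := by
  refine tendsto_order.2 ⟨fun a ha => .of_forall fun k =>
    ha.trans_le (Real.iSup_nonneg fun n => hT0 n k), fun ε hε => ?_⟩
  obtain ⟨N, hN⟩ := eventually_atTop.1 (hd.eventually_lt_const (by positivity : 0 < ε / 4))
  have hsmall : ∀ᶠ k in l, ∀ n ∈ Finset.range N, T n k < ε / 2 :=
    (Finset.range N).eventually_all.2 fun n _ => (hT n).eventually_lt_const (half_pos hε)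
  filter_upwards [hsmall, hs.eventually_lt_const (by positivity : 0 < ε / 4)] with k hTk hsk
  refine (ciSup_le fun n => ?_).trans_lt (half_lt_self hε)
  rcases lt_or_ge n N with hn | hn
  · exact (hTk n (Finset.mem_range.2 hn)).le
  · linarith [hle n k, hN n hn]

theorem tsum_subtype_le_tsum_subtype_add_tsum {α : Type*} {f g h : α → ℝ} (s : Set α)
    (hf : Summable f) (hg : Summable g) (hh : Summable h) (h0 : ∀ i, 0 ≤ h i)
    (hfgh : ∀ i, f i ≤ g i + h i) :
    ∑' i : s, f i ≤ ∑' i : s, g i + ∑' i, h i := by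
  calc ∑' i : s, f i ≤ ∑' i : s, (g i + h i) :=
        (hf.subtype s).tsum_le_tsum (fun i => hfgh i) ((hg.subtype s).add (hh.subtype s))
    _ = ∑' i : s, g i + ∑' i : s, h i := (hg.subtype s).tsum_add (hh.subtype s)
    _ ≤ ∑' i : s, g i + ∑' i, h i := by
        gcongr
        exact hh.tsum_subtype_le h s h0

theorem uniform_tail_bound_of_traceNorm_tendsto_general
    {H : Type*} [NormedAddCommGroup H] [InnerProductSpace ℂ H] [CompleteSpace H]
    (b : HilbertBasis ℕ ℂ H)
    (ρs : ℕ → H →L[ℂ] H) (ρ : H →L[ℂ] H)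
    (hpos : ∀ n, (ρs n).IsPositive) (hposρ : ρ.IsPositive)
    (hsum : ∀ n, Summable fun i => (⟪b i, (ρs n) (b i)⟫_ℂ).re)
    (hsumρ : Summable fun i => (⟪b i, ρ (b i)⟫_ℂ).re)
    -- `Δ n` is the absolute value `|ρₙ − ρ|`: the positive operator whose square is
    -- `(ρₙ − ρ)* (ρₙ − ρ)`
    (Δ : ℕ → H →L[ℂ] H) (hΔpos : ∀ n, (Δ n).IsPositive)
    (hΔsq : ∀ n, Δ n ∘L Δ n =
      (ContinuousLinearMap.adjoint (ρs n - ρ)) ∘L (ρs n - ρ))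
    (hΔsum : ∀ n, Summable fun i => (⟪b i, (Δ n) (b i)⟫_ℂ).re)
    -- trace-norm convergence `‖ρₙ − ρ‖₁ = tr |ρₙ − ρ| → 0`
    (htendsto : Tendsto (fun n => ∑' i, (⟪b i, (Δ n) (b i)⟫_ℂ).re) atTop (𝓝 0)) :
    Tendsto (fun k => ⨆ n, ∑' i : {i : ℕ // k ≤ i}, (⟪b i.1, (ρs n) (b i.1)⟫_ℂ).re)
      atTop (𝓝 0) := by
  have hdiag : ∀ n x, (⟪x, ρs n x⟫_ℂ).re ≤ (⟪x, ρ x⟫_ℂ).re + (⟪x, Δ n x⟫_ℂ).re := fun n x => by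
    have := ContinuousLinearMap.re_inner_apply_le_of_comp_self_eq
      ((hpos n).isSelfAdjoint.sub hposρ.isSelfAdjoint) (hΔpos n) (hΔsq n) x
    simp only [sub_apply, inner_sub_right, Complex.sub_re] at this
    linarith
  refine tendsto_iSup_zero_of_le_add
    (fun n k => tsum_nonneg fun i => (hpos n).re_inner_nonneg_right _)
    (fun n => tendsto_tsum_subtype_le_atTop_zero fun i => (⟪b i, ρs n (b i)⟫_ℂ).re)
    (tendsto_tsum_subtype_le_atTop_zero fun i => (⟪b i, ρ (b i)⟫_ℂ).re) htendsto fun n k => ?_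
  exact tsum_subtype_le_tsum_subtype_add_tsum {i | k ≤ i} (hsum n) hsumρ (hΔsum n)
    (fun i => (hΔpos n).re_inner_nonneg_right _) fun i => hdiag n (b i)

/-- Let `ρₙ, ρ` be positive trace-class operators of trace `1` on a
separable complex Hilbert space with `tr |ρₙ − ρ| → 0` (where `|M|` is the positive square
root of `M*M`). Then for every orthonormal basis `{bᵢ}` the tails of the diagonal entries
are uniformly small: `sup_n ∑_{i ≥ k} ⟪bᵢ, ρₙ bᵢ⟫ → 0` as `k → ∞`. -/
theorem uniform_tail_bound_of_traceNorm_tendsto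
    {H : Type*} [NormedAddCommGroup H] [InnerProductSpace ℂ H] [CompleteSpace H]
    [SecondCountableTopology H]
    (b : HilbertBasis ℕ ℂ H)
    (ρs : ℕ → H →L[ℂ] H) (ρ : H →L[ℂ] H)
    (hpos : ∀ n, (ρs n).IsPositive) (hposρ : ρ.IsPositive)
    (hsum : ∀ n, Summable fun i => (⟪b i, (ρs n) (b i)⟫_ℂ).re)
    (hsumρ : Summable fun i => (⟪b i, ρ (b i)⟫_ℂ).re)
    (htr : ∀ n, ∑' i, (⟪b i, (ρs n) (b i)⟫_ℂ).re = 1)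
    (htrρ : ∑' i, (⟪b i, ρ (b i)⟫_ℂ).re = 1)
    -- `Δ n` is the absolute value `|ρₙ − ρ|`: the positive operator whose square is
    -- `(ρₙ − ρ)* (ρₙ − ρ)`
    (Δ : ℕ → H →L[ℂ] H) (hΔpos : ∀ n, (Δ n).IsPositive)
    (hΔsq : ∀ n, Δ n ∘L Δ n =
      (ContinuousLinearMap.adjoint (ρs n - ρ)) ∘L (ρs n - ρ))
    (hΔsum : ∀ n, Summable fun i => (⟪b i, (Δ n) (b i)⟫_ℂ).re)
    -- trace-norm convergence `‖ρₙ − ρ‖₁ = tr |ρₙ − ρ| → 0`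
    (htendsto : Tendsto (fun n => ∑' i, (⟪b i, (Δ n) (b i)⟫_ℂ).re) atTop (𝓝 0)) :
    Tendsto (fun k => ⨆ n, ∑' i : {i : ℕ // k ≤ i}, (⟪b i.1, (ρs n) (b i.1)⟫_ℂ).re)
      atTop (𝓝 0) :=
  uniform_tail_bound_of_traceNorm_tendsto_general b ρs ρ hpos hposρ hsum hsumρ Δ hΔpos hΔsq hΔsum
    htendsto
end

section
/- Let H be a separable complex Hilbert space. For n ∈ ℕ let μₙ be Borel probability measures on H with ∫ ‖ψ‖² dμₙ(ψ) = 1, and let μ be a Borel probability measure on H with ∫ ‖ψ‖² dμ(ψ) = 1. If μₙ converges weakly to μ, then the adjusted measures converge weakly: Aμₙ ⇒ Aμ, where Aν(dψ) = ‖ψ‖² ν(dψ). Equivalently, for every bounded continuous f : H → ℝ, ∫ f(ψ) ‖ψ‖² dμₙ(ψ) → ∫ f(ψ) ‖ψ‖² dμ(ψ). -/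
/-!
Truncate `‖ψ‖²` at level `k`: `min (‖ψ‖², k)` is bounded and continuous, so weak convergence
handles `∫ f · min (‖ψ‖², k)`. The error made by truncating is at most `‖f‖` times
`∫ ‖ψ‖² − ∫ min (‖ψ‖², k)`; under `μₙ` this converges, by weak convergence and `∫ ‖ψ‖² dμₙ = 1`,
to the same quantity for `μ`, which tends to `0` as `k → ∞` by dominated convergence.
-/

open MeasureTheory Filter
open scoped Topology BoundedContinuousFunction

lemma tendsto_of_forall_dist_le {ι κ α : Type*} [PseudoMetricSpace α] {l : Filter ι}
    {l' : Filter κ} [l'.NeBot] {u : ι → α} {a : α} {b : κ → ι → ℝ} {c : κ → ℝ}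
    (hb : ∀ k, Tendsto (b k) l (𝓝 (c k))) (hc : Tendsto c l' (𝓝 0))
    (hu : ∀ k i, dist (u i) a ≤ b k i) : Tendsto u l (𝓝 a) := by
  rw [Metric.tendsto_nhds]
  intro ε hε
  obtain ⟨k, hk⟩ := (hc.eventually (gt_mem_nhds hε)).exists
  filter_upwards [(hb k).eventually (gt_mem_nhds hk)] with i hi
  exact (hu k i).trans_lt hi

section Truncation

variable {X : Type*} [TopologicalSpace X]

noncomputable def truncation (g : C(X, ℝ)) (hg : 0 ≤ g) (k : ℕ) : X →ᵇ ℝ :=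
  .ofNormedAddCommGroup (fun x => min (g x) k) (by fun_prop) k fun x => by
    rw [Real.norm_eq_abs, abs_of_nonneg (le_min (hg x) k.cast_nonneg : 0 ≤ min (g x) k)]
    exact min_le_right _ _

lemma truncation_apply (g : C(X, ℝ)) (hg : 0 ≤ g) (k : ℕ) (x : X) :
    truncation g hg k x = min (g x) k := rfl

variable [MeasurableSpace X] [OpensMeasurableSpace X]

lemma abs_integral_mul_sub_integral_mul_le (ν : Measure X) (f : X →ᵇ ℝ) {g h : X → ℝ}
    (hg : Integrable g ν) (hh : Integrable h ν) (hhg : h ≤ g) :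
    |∫ x, f x * g x ∂ν - ∫ x, f x * h x ∂ν| ≤ ‖f‖ * (∫ x, g x ∂ν - ∫ x, h x ∂ν) := by
  have hfg : Integrable (fun x => f x * g x) ν :=
    hg.bdd_mul f.continuous.aestronglyMeasurable (ae_of_all _ f.norm_coe_le_norm)
  have hfh : Integrable (fun x => f x * h x) ν :=
    hh.bdd_mul f.continuous.aestronglyMeasurable (ae_of_all _ f.norm_coe_le_norm)
  rw [← integral_sub hfg hfh, ← integral_sub hg hh, ← integral_const_mul ‖f‖ (fun x => g x - h x),
    ← Real.norm_eq_abs]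
  refine norm_integral_le_of_norm_le ((hg.sub hh).const_mul _) (ae_of_all _ fun x => ?_)
  rw [← mul_sub, norm_mul, Real.norm_of_nonneg (sub_nonneg.2 (hhg x))]
  exact mul_le_mul_of_nonneg_right (f.norm_coe_le_norm x) (sub_nonneg.2 (hhg x))

lemma tendsto_integral_truncation (ν : Measure X) (g : C(X, ℝ)) (hg : 0 ≤ g)
    (hgν : Integrable g ν) :
    Tendsto (fun k => ∫ x, truncation g hg k x ∂ν) atTop (𝓝 (∫ x, g x ∂ν)) := by
  refine tendsto_integral_of_dominated_convergence g
    (fun k => (truncation g hg k).continuous.aestronglyMeasurable) hgν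
    (fun k => ae_of_all _ fun x => ?_) (ae_of_all _ fun x => ?_)
  · rw [truncation_apply, Real.norm_of_nonneg (le_min (hg x) k.cast_nonneg : 0 ≤ min (g x) k)]
    exact min_le_left _ _
  · refine tendsto_const_nhds.congr' ?_
    filter_upwards [tendsto_natCast_atTop_atTop.eventually_ge_atTop (g x)] with k hk
    exact (min_eq_left hk).symm

theorem tendsto_integral_mul_of_tendsto_integral {μs : ℕ → Measure X} {μ : Measure X}
    [∀ n, IsFiniteMeasure (μs n)] [IsFiniteMeasure μ]
    (hweak : ∀ f : X →ᵇ ℝ, Tendsto (fun n => ∫ x, f x ∂(μs n)) atTop (𝓝 (∫ x, f x ∂μ)))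
    (g : C(X, ℝ)) (hg : 0 ≤ g) (hgμs : ∀ n, Integrable g (μs n)) (hgμ : Integrable g μ)
    (hgconv : Tendsto (fun n => ∫ x, g x ∂(μs n)) atTop (𝓝 (∫ x, g x ∂μ))) (f : X →ᵇ ℝ) :
    Tendsto (fun n => ∫ x, f x * g x ∂(μs n)) atTop (𝓝 (∫ x, f x * g x ∂μ)) := by
  set T := truncation g hg
  have hTg (k : ℕ) : ⇑(T k) ≤ g := fun x => min_le_left _ _
  have hTμ (k : ℕ) := abs_integral_mul_sub_integral_mul_le μ f hgμ ((T k).integrable μ) (hTg k)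
  have hTμs (k n : ℕ) := abs_integral_mul_sub_integral_mul_le (μs n) f (hgμs n)
    ((T k).integrable (μs n)) (hTg k)
  let err (k : ℕ) := ‖f‖ * (∫ x, g x ∂μ - ∫ x, T k x ∂μ)
  refine tendsto_of_forall_dist_le (l' := atTop) (c := fun k => err k + |0| + err k)
    (b := fun k n => ‖f‖ * (∫ x, g x ∂(μs n) - ∫ x, T k x ∂(μs n)) +
      |∫ x, f x * T k x ∂(μs n) - ∫ x, f x * T k x ∂μ| + err k) (fun k => ?_) ?_ fun k n => ?_
  · refine ((((hgconv.sub (hweak (T k))).const_mul ‖f‖).add ?_).add tendsto_const_nhds)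
    simpa using ((hweak (f * T k)).sub_const (∫ x, f x * T k x ∂μ)).abs
  · have := ((tendsto_integral_truncation μ g hg hgμ).const_sub (∫ x, g x ∂μ)).const_mul ‖f‖
    simpa [err] using this.add this
  · calc dist (∫ x, f x * g x ∂(μs n)) (∫ x, f x * g x ∂μ)
        ≤ dist (∫ x, f x * g x ∂(μs n)) (∫ x, f x * T k x ∂(μs n)) +
            dist (∫ x, f x * T k x ∂(μs n)) (∫ x, f x * T k x ∂μ) +
            dist (∫ x, f x * T k x ∂μ) (∫ x, f x * g x ∂μ) := dist_triangle4 _ _ _ _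
      _ ≤ _ := by
        rw [dist_comm (∫ x, f x * T k x ∂μ)]
        simp only [Real.dist_eq]
        gcongr
        exacts [hTμs k n, hTμ k]

end Truncation

theorem adjusted_weak_convergence_general
    {H : Type*} [NormedAddCommGroup H]
    [MeasurableSpace H] [BorelSpace H]
    (μs : ℕ → Measure H) (hprob : ∀ n, IsProbabilityMeasure (μs n))
    (μ : Measure H) (hprobμ : IsProbabilityMeasure μ)
    (h2 : ∀ n, ∫ ψ, ‖ψ‖ ^ 2 ∂(μs n) = 1) (h2μ : ∫ ψ, ‖ψ‖ ^ 2 ∂μ = 1)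
    (hweak : ∀ f : H →ᵇ ℝ,
      Tendsto (fun n => ∫ ψ, f ψ ∂(μs n)) atTop (𝓝 (∫ ψ, f ψ ∂μ))) :
    ∀ f : H →ᵇ ℝ,
      Tendsto (fun n => ∫ ψ, f ψ * ‖ψ‖ ^ 2 ∂(μs n)) atTop
        (𝓝 (∫ ψ, f ψ * ‖ψ‖ ^ 2 ∂μ)) := by
  have hint (ν : Measure H) (hν : ∫ ψ, ‖ψ‖ ^ 2 ∂ν = 1) : Integrable (fun ψ : H => ‖ψ‖ ^ 2) ν :=
    .of_integral_ne_zero (by simp [hν])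
  exact tendsto_integral_mul_of_tendsto_integral hweak ⟨fun ψ => ‖ψ‖ ^ 2, by fun_prop⟩
    (fun ψ => sq_nonneg ‖ψ‖) (fun n => hint _ (h2 n)) (hint μ h2μ)
    (by simp only [ContinuousMap.coe_mk, h2, h2μ, tendsto_const_nhds])

/-- Let `μₙ, μ` be Borel probability measures on a separable complex
Hilbert space, all with `∫ ‖ψ‖² = 1`. If `μₙ ⇒ μ` weakly, then the adjusted measures
`Aν(dψ) = ‖ψ‖² ν(dψ)` converge weakly, `Aμₙ ⇒ Aμ`: for every bounded continuous
`f : H → ℝ`, `∫ f(ψ) ‖ψ‖² dμₙ(ψ) → ∫ f(ψ) ‖ψ‖² dμ(ψ)`. -/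
theorem adjusted_weak_convergence
    {H : Type*} [NormedAddCommGroup H] [InnerProductSpace ℂ H] [CompleteSpace H]
    [SecondCountableTopology H] [MeasurableSpace H] [BorelSpace H]
    (μs : ℕ → Measure H) (hprob : ∀ n, IsProbabilityMeasure (μs n))
    (μ : Measure H) (hprobμ : IsProbabilityMeasure μ)
    (h2 : ∀ n, ∫ ψ, ‖ψ‖ ^ 2 ∂(μs n) = 1) (h2μ : ∫ ψ, ‖ψ‖ ^ 2 ∂μ = 1)
    (hweak : ∀ f : H →ᵇ ℝ,
      Tendsto (fun n => ∫ ψ, f ψ ∂(μs n)) atTop (𝓝 (∫ ψ, f ψ ∂μ))) :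
    ∀ f : H →ᵇ ℝ,
      Tendsto (fun n => ∫ ψ, f ψ * ‖ψ‖ ^ 2 ∂(μs n)) atTop
        (𝓝 (∫ ψ, f ψ * ‖ψ‖ ^ 2 ∂μ)) :=
  adjusted_weak_convergence_general μs hprob μ hprobμ h2 h2μ hweak
end
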